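/- arXiv:1610.03359 — 5 statements merged into one kernel-verified Lean document; each statement's English description precedes it below -/
import Mathlib

section
/- Let H be positive self-adjoint and W(t) a symmetric operator such that ‖H^p W(t) H^{-p-ν}‖ ≤ R for all 0 ≤ p ≤ n, where 0 ≤ ν < 1 and R > 0. Then for every z not in σ(H) with R·‖H^ν(H−z)^{-1}‖ ≤ 1/2, z is in the resolvent set of H+W(t), and for every integer 0 ≤ p ≤ n and real 0 ≤ θ ≤ 1: ‖H^{p+θ}(H+W(t)−z)^{-1}H^{-p}‖ ≤ 2‖H^θ(H−z)^{-1}‖. -/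
/-!
With `u = H - z`, we have `H + W - z = (1 + W u⁻¹) u`, and conjugation by `H^p` turns
`1 + W u⁻¹` into `1 + B_p` where `B_p = H^p W u⁻¹ H^{-p} = (H^p W H^{-p-ν}) (H^ν u⁻¹)` has norm
at most `R ‖H^ν u⁻¹‖ ≤ 1/2`. A Neumann series inverts `1 + B_p` with an inverse of norm at most
`2`, and `H^{p+θ} (H + W - z)⁻¹ H^{-p} = H^θ u⁻¹ (1 + B_p)⁻¹`.
-/

open Ring

theorem isUnit_one_add_and_norm_inverse_le_two {R : Type*} [NormedRing R] [CompleteSpace R]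
    (h1 : ‖(1 : R)‖ ≤ 1) {b : R} (hb : ‖b‖ ≤ 1 / 2) :
    IsUnit (1 + b) ∧ ‖inverse (1 + b)‖ ≤ 2 := by
  have hb' : ‖-b‖ < 1 := by rw [norm_neg]; linarith
  rw [← sub_neg_eq_add]
  refine ⟨(Units.oneSub (-b) hb').isUnit, ?_⟩
  calc ‖inverse (1 - -b)‖ = ‖∑' n : ℕ, (-b) ^ n‖ := by
        rw [NormedRing.inverse_one_sub _ hb']; rfl
    _ ≤ ‖(1 : R)‖ - 1 + (1 - ‖-b‖)⁻¹ := tsum_geometric_le_of_norm_lt_one _ hb'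
    _ ≤ 2 := by
        rw [norm_neg]
        have : (1 - ‖b‖)⁻¹ ≤ 2 := by
          rw [inv_le_comm₀ (by linarith) two_pos]; linarith
        linarith

theorem Commute.ringInverse_right {M₀ : Type*} [MonoidWithZero M₀] {a b : M₀} (h : Commute a b) :
    Commute a (inverse b) := by
  by_cases hb : IsUnit b
  · obtain ⟨U, rfl⟩ := hb
    rw [inverse_unit]
    exact h.units_inv_right
  · rw [inverse_non_unit _ hb]
    exact Commute.zero_right a

section ConjugatedInverse

variable {A : Type*} [Ring A] {u w : A}

theorem add_eq_conj_one_add_mul_inverse (hu : IsUnit u) (T : Aˣ) :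
    u + w = ↑T⁻¹ * (1 + T * w * inverse u * ↑T⁻¹) * T * u := by
  simp only [mul_add, add_mul, mul_one, Units.inv_mul, one_mul, ← mul_assoc]
  simp only [mul_assoc, inverse_mul_cancel u hu, Units.inv_mul, mul_one]

theorem isUnit_add_of_isUnit_one_add_conj (hu : IsUnit u) (T : Aˣ)
    (hB : IsUnit (1 + T * w * inverse u * ↑T⁻¹)) : IsUnit (u + w) := by
  rw [add_eq_conj_one_add_mul_inverse hu T]
  exact ((T⁻¹.isUnit.mul hB).mul T.isUnit).mul hu

theorem conj_inverse_add_eq (hu : IsUnit u) (T : Aˣ) (hTu : Commute (T : A) u) :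
    T * inverse (u + w) * ↑T⁻¹ = inverse u * inverse (1 + T * w * inverse u * ↑T⁻¹) := by
  rw [add_eq_conj_one_add_mul_inverse hu T, inverse_mul (Or.inr hu),
    inverse_mul (Or.inr T.isUnit), inverse_mul (Or.inl T⁻¹.isUnit), inverse_unit, inverse_unit,
    inv_inv]
  simp only [← mul_assoc, hTu.ringInverse_right.eq]
  simp only [mul_assoc, Units.mul_inv, mul_one]

end ConjugatedInverse

section CfcRpow

variable {A : Type*} [Ring A] [StarRing A] [Algebra ℝ A] [TopologicalSpace A]
  [ContinuousFunctionalCalculus ℝ A IsSelfAdjoint] {a : A}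

theorem cfc_rpow_add (hpos : ∀ x ∈ spectrum ℝ a, 0 < x) (r s : ℝ) :
    cfc (fun x : ℝ => x ^ (r + s)) a = cfc (fun x : ℝ => x ^ r) a * cfc (fun x : ℝ => x ^ s) a := by
  have hcont (q : ℝ) : ContinuousOn (fun x : ℝ => x ^ q) (spectrum ℝ a) := fun x hx =>
    (Real.continuousAt_rpow_const x q (Or.inl (hpos x hx).ne')).continuousWithinAt
  rw [← cfc_mul _ _ a (hcont r) (hcont s)]
  exact cfc_congr fun x hx => Real.rpow_add (hpos x hx) r s

theorem cfc_rpow_zero (ha : IsSelfAdjoint a) : cfc (fun x : ℝ => x ^ (0 : ℝ)) a = 1 := by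
  simp only [Real.rpow_zero]
  exact cfc_const_one ℝ a

theorem cfc_rpow_mul_cfc_rpow_neg (ha : IsSelfAdjoint a) (hpos : ∀ x ∈ spectrum ℝ a, 0 < x)
    (r : ℝ) : cfc (fun x : ℝ => x ^ r) a * cfc (fun x : ℝ => x ^ (-r)) a = 1 := by
  rw [← cfc_rpow_add hpos, add_neg_cancel, cfc_rpow_zero ha]

@[simps]
noncomputable def cfcRpowUnit (ha : IsSelfAdjoint a) (hpos : ∀ x ∈ spectrum ℝ a, 0 < x) (r : ℝ) :
    Aˣ where
  val := cfc (fun x : ℝ => x ^ r) a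
  inv := cfc (fun x : ℝ => x ^ (-r)) a
  val_inv := cfc_rpow_mul_cfc_rpow_neg ha hpos r
  inv_val := by simpa using cfc_rpow_mul_cfc_rpow_neg ha hpos (-r)

theorem mul_mul_cfc_rpow_eq (hpos : ∀ x ∈ spectrum ℝ a, 0 < x)
    {x y : A} {s : ℝ} (hy : Commute (cfc (fun t : ℝ => t ^ s) a) y) (ν : ℝ) :
    x * y * cfc (fun t : ℝ => t ^ s) a
      = x * cfc (fun t : ℝ => t ^ (s - ν)) a * (cfc (fun t : ℝ => t ^ ν) a * y) := by
  simp only [mul_assoc]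
  rw [← hy.eq, ← mul_assoc (cfc _ a), ← cfc_rpow_add hpos, sub_add_cancel]

end CfcRpow

theorem sandwiched_resolvent_estimate_general
    {E : Type*} [NormedAddCommGroup E] [InnerProductSpace ℂ E] [CompleteSpace E]
    (H : E →L[ℂ] E) (hsa : IsSelfAdjoint H)
    (hpos : ∀ x ∈ spectrum ℝ H, (0:ℝ) < x)
    (W : E →L[ℂ] E)
    (n : ℕ) (ν R : ℝ)
    (hWb : ∀ p : ℕ, p ≤ n →
      ‖cfc (fun x : ℝ => x ^ (p:ℝ)) H * W * cfc (fun x : ℝ => x ^ (-(p:ℝ) - ν)) H‖ ≤ R)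
    (z : ℂ) (hz : z ∉ spectrum ℂ H)
    (hsmall : R * ‖cfc (fun x : ℝ => x ^ ν) H
        * Ring.inverse (H - algebraMap ℂ (E →L[ℂ] E) z)‖ ≤ 1/2) :
    IsUnit (H + W - algebraMap ℂ (E →L[ℂ] E) z) ∧
    ∀ p : ℕ, p ≤ n → ∀ θ : ℝ, 0 ≤ θ → θ ≤ 1 →
      ‖cfc (fun x : ℝ => x ^ ((p:ℝ) + θ)) H
          * Ring.inverse (H + W - algebraMap ℂ (E →L[ℂ] E) z)
          * cfc (fun x : ℝ => x ^ (-(p:ℝ))) H‖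
        ≤ 2 * ‖cfc (fun x : ℝ => x ^ θ) H
          * Ring.inverse (H - algebraMap ℂ (E →L[ℂ] E) z)‖ := by
  rw [add_sub_right_comm]
  set u := H - algebraMap ℂ (E →L[ℂ] E) z
  have hu : IsUnit u := by simpa using (spectrum.notMem_iff.mp hz).neg
  have hHu (r : ℝ) : Commute (cfc (fun x : ℝ => x ^ r) H) u :=
    ((Commute.refl H).sub_right (Algebra.commutes z H).symm).cfc_real _
  set T := cfcRpowUnit hsa hpos
  have hB (p : ℕ) (hp : p ≤ n) : ‖(T p : E →L[ℂ] E) * W * inverse u * ↑(T p)⁻¹‖ ≤ 1 / 2 := by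
    rw [val_cfcRpowUnit, val_inv_cfcRpowUnit, mul_mul_cfc_rpow_eq hpos (hHu _).ringInverse_right ν]
    exact (norm_mul_le _ _).trans
      ((mul_le_mul_of_nonneg_right (hWb p hp) (norm_nonneg _)).trans hsmall)
  have hneumann (p : ℕ) (hp : p ≤ n) :=
    isUnit_one_add_and_norm_inverse_le_two ContinuousLinearMap.norm_id_le (hB p hp)
  refine ⟨isUnit_add_of_isUnit_one_add_conj hu (T (0 : ℕ)) (hneumann 0 n.zero_le).1,
    fun p hp θ _ _ => ?_⟩
  have hconj := conj_inverse_add_eq (w := W) hu (T p) (hHu p)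
  rw [val_cfcRpowUnit, val_inv_cfcRpowUnit] at hconj
  rw [add_comm, cfc_rpow_add hpos, mul_assoc, mul_assoc, ← mul_assoc (cfc _ H) (inverse _), hconj,
    ← mul_assoc]
  calc _ ≤ ‖cfc (fun x : ℝ => x ^ θ) H * inverse u‖ * ‖inverse (1 + _)‖ := norm_mul_le _ _
    _ ≤ ‖cfc (fun x : ℝ => x ^ θ) H * inverse u‖ * 2 := by gcongr; exact (hneumann p hp).2
    _ = 2 * ‖cfc (fun x : ℝ => x ^ θ) H * inverse u‖ := mul_comm _ _

/-- Sandwiched resolvent estimate for `H + W` with an `H^ν`-bounded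
symmetric perturbation `W` (`0 ≤ ν < 1`): if `R·‖H^ν(H−z)⁻¹‖ ≤ 1/2` then `z` is in the
resolvent set of `H + W` and
`‖H^{p+θ}(H+W−z)⁻¹H^{-p}‖ ≤ 2 ‖H^θ(H−z)⁻¹‖` for `0 ≤ p ≤ n`, `0 ≤ θ ≤ 1`. -/
theorem sandwiched_resolvent_estimate
    {E : Type*} [NormedAddCommGroup E] [InnerProductSpace ℂ E] [CompleteSpace E]
    (H : E →L[ℂ] E) (hsa : IsSelfAdjoint H)
    (hpos : ∀ x ∈ spectrum ℝ H, (0:ℝ) < x)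
    (W : E →L[ℂ] E) (hWsa : IsSelfAdjoint W)
    (n : ℕ) (ν R : ℝ) (hν0 : 0 ≤ ν) (hν1 : ν < 1) (hR : 0 < R)
    (hWb : ∀ p : ℕ, p ≤ n →
      ‖cfc (fun x : ℝ => x ^ (p:ℝ)) H * W * cfc (fun x : ℝ => x ^ (-(p:ℝ) - ν)) H‖ ≤ R)
    (z : ℂ) (hz : z ∉ spectrum ℂ H)
    (hsmall : R * ‖cfc (fun x : ℝ => x ^ ν) H
        * Ring.inverse (H - algebraMap ℂ (E →L[ℂ] E) z)‖ ≤ 1/2) :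
    IsUnit (H + W - algebraMap ℂ (E →L[ℂ] E) z) ∧
    ∀ p : ℕ, p ≤ n → ∀ θ : ℝ, 0 ≤ θ → θ ≤ 1 →
      ‖cfc (fun x : ℝ => x ^ ((p:ℝ) + θ)) H
          * Ring.inverse (H + W - algebraMap ℂ (E →L[ℂ] E) z)
          * cfc (fun x : ℝ => x ^ (-(p:ℝ))) H‖
        ≤ 2 * ‖cfc (fun x : ℝ => x ^ θ) H
          * Ring.inverse (H - algebraMap ℂ (E →L[ℂ] E) z)‖ :=
  sandwiched_resolvent_estimate_general H hsa hpos W n ν R hWb z hz hsmall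
end

section
/- With H₀ and H as in the discrete model on ℓ²(ℤ^d), for every r > 0 the operator H^r [H₀, H] H^{-r} is bounded on ℓ²(ℤ^d); equivalently [H₀, H] is bounded on the weighted space 𝓗^{2r} = {u : Σ_n ⟨n⟩^{2r}|u(n)|² < ∞}. -/
/-!
On `ℓ²(ℤ^d)` the operator `H^r [H₀, H] H^{-r}` is a sum of `2d` weighted shifts
`u ↦ c · u(· + v)`, one for each neighbour offset `v = ±eᵢ`, with weight
`c n = ⟨n⟩^r (⟨n + v⟩ - ⟨n⟩) ⟨n + v⟩^{-r}`. A weighted shift is bounded as soon as its weight is.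
The weight is bounded because `⟨n⟩ = ‖(1, n)‖` is `1`-Lipschitz for the Euclidean norm, so
`|⟨n + v⟩ - ⟨n⟩| ≤ |v|` and hence `⟨n⟩ ≤ (1 + |v|) ⟨n + v⟩`.
-/

/-- Japanese bracket `⟨n⟩ = (1 + |n|²)^{1/2}` on `ℤ^d`. -/
noncomputable def jbr {d : ℕ} (n : Fin d → ℤ) : ℝ :=
  Real.sqrt (1 + ∑ i, ((n i : ℝ)) ^ 2)

open scoped lp ENNReal

namespace lp

variable {α 𝕜 E : Type*} [NormedField 𝕜] [NormedAddCommGroup E] [NormedSpace 𝕜 E]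
  {p : ℝ≥0∞} [Fact (1 ≤ p)]

lemma sum_norm_smul_comp_rpow_le (hp : p ≠ ∞) (c : ℓ^∞(α, 𝕜)) (e : α ≃ α) (u : ℓ^p(α, E))
    (s : Finset α) :
    ∑ n ∈ s, ‖c n • u (e n)‖ ^ p.toReal ≤ (‖c‖ * ‖u‖) ^ p.toReal := by
  have hp₀ : 0 < p.toReal := ENNReal.toReal_pos (zero_lt_one.trans_le Fact.out).ne' hp
  calc ∑ n ∈ s, ‖c n • u (e n)‖ ^ p.toReal
      ≤ ∑ n ∈ s, ‖c‖ ^ p.toReal * ‖u (e n)‖ ^ p.toReal := by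
        gcongr with n
        rw [norm_smul, Real.mul_rpow (norm_nonneg _) (norm_nonneg _)]
        gcongr
        exact norm_apply_le_norm ENNReal.top_ne_zero c n
    _ = ‖c‖ ^ p.toReal * ∑ m ∈ s.map e.toEmbedding, ‖u m‖ ^ p.toReal := by
        rw [Finset.mul_sum, Finset.sum_map]; rfl
    _ ≤ ‖c‖ ^ p.toReal * ‖u‖ ^ p.toReal := by
        gcongr
        exact sum_rpow_le_norm_rpow hp₀ u _
    _ = (‖c‖ * ‖u‖) ^ p.toReal := (Real.mul_rpow (norm_nonneg _) (norm_nonneg _)).symm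

noncomputable def weightedShift (hp : p ≠ ∞) (c : ℓ^∞(α, 𝕜)) (e : α ≃ α) :
    ℓ^p(α, E) →L[𝕜] ℓ^p(α, E) :=
  LinearMap.mkContinuous
    { toFun u := ⟨fun n => c n • u (e n), memℓp_gen' (sum_norm_smul_comp_rpow_le hp c e u)⟩
      map_add' u v := by ext n; exact smul_add _ _ _
      map_smul' a u := by ext n; simp [smul_comm (c n) a] }
    ‖c‖
    fun u => norm_le_of_forall_sum_le
      (ENNReal.toReal_pos (zero_lt_one.trans_le Fact.out).ne' hp) (by positivity)
      (sum_norm_smul_comp_rpow_le hp c e u)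

@[simp]
lemma weightedShift_apply (hp : p ≠ ∞) (c : ℓ^∞(α, 𝕜)) (e : α ≃ α) (u : ℓ^p(α, E)) (n : α) :
    weightedShift hp c e u n = c n • u (e n) := rfl

end lp

section JapaneseBracket

variable {d : ℕ}

def latticeEmbedding (n : Fin d → ℤ) : EuclideanSpace ℝ (Fin d) :=
  WithLp.toLp 2 fun i => (n i : ℝ)

lemma latticeEmbedding_add (m n : Fin d → ℤ) :
    latticeEmbedding (m + n) = latticeEmbedding m + latticeEmbedding n := by
  ext i; simp [latticeEmbedding]

lemma jbr_eq_norm (n : Fin d → ℤ) :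
    jbr n = ‖(WithLp.toLp 2 ((1 : ℝ), latticeEmbedding n) :
      WithLp 2 (ℝ × EuclideanSpace ℝ (Fin d)))‖ := by
  simp [jbr, WithLp.prod_norm_eq_of_L2, EuclideanSpace.real_norm_sq_eq, latticeEmbedding]

lemma one_le_jbr (n : Fin d → ℤ) : 1 ≤ jbr n :=
  Real.one_le_sqrt.2 (le_add_of_nonneg_right (Finset.sum_nonneg fun _ _ => sq_nonneg _))

lemma abs_jbr_add_sub_jbr_le (n v : Fin d → ℤ) :
    |jbr (n + v) - jbr n| ≤ ‖latticeEmbedding v‖ := by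
  rw [jbr_eq_norm, jbr_eq_norm]
  refine (abs_norm_sub_norm_le _ _).trans_eq ?_
  rw [← WithLp.toLp_sub, Prod.mk_sub_mk, sub_self, latticeEmbedding_add, add_sub_cancel_left,
    WithLp.prod_norm_eq_of_L2]
  simp

lemma abs_rpow_mul_sub_mul_inv_rpow_le {r x y δ : ℝ} (hr : 0 ≤ r) (hx : 0 ≤ x) (hy : 1 ≤ y)
    (hxy : |y - x| ≤ δ) : |x ^ r * (y - x) * (y ^ r)⁻¹| ≤ (1 + δ) ^ r * δ := by
  have hδ : 0 ≤ δ := (abs_nonneg _).trans hxy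
  have hyr : 0 < y ^ r := Real.rpow_pos_of_pos (by linarith) r
  have hxr : x ^ r ≤ (1 + δ) ^ r * y ^ r := by
    rw [← Real.mul_rpow (by linarith) (by linarith)]
    gcongr
    nlinarith [(abs_le.1 hxy).1]
  rw [abs_mul, abs_mul, abs_inv, abs_of_nonneg (Real.rpow_nonneg hx r), abs_of_pos hyr,
    ← div_eq_mul_inv, div_le_iff₀ hyr]
  calc x ^ r * |y - x| ≤ ((1 + δ) ^ r * y ^ r) * δ := by gcongr
    _ = (1 + δ) ^ r * δ * y ^ r := by ring

variable {r : ℝ}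

-- The matrix element `⟪δₙ, H^r [H₀, H] H^{-r} δₘ⟫` for neighbouring sites `n`, `m`.
noncomputable def commutatorKernel (r : ℝ) (n m : Fin d → ℤ) : ℝ :=
  jbr n ^ r * (jbr m - jbr n) * (jbr m ^ r)⁻¹

lemma abs_commutatorKernel_add_le (hr : 0 ≤ r) (n v : Fin d → ℤ) :
    |commutatorKernel r n (n + v)| ≤ (1 + ‖latticeEmbedding v‖) ^ r * ‖latticeEmbedding v‖ :=
  abs_rpow_mul_sub_mul_inv_rpow_le hr (zero_le_one.trans (one_le_jbr n)) (one_le_jbr _)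
    (abs_jbr_add_sub_jbr_le n v)

noncomputable def shiftedCommutatorKernel (hr : 0 ≤ r) (v : Fin d → ℤ) : ℓ^∞(Fin d → ℤ, ℂ) :=
  ⟨fun n => (commutatorKernel r n (n + v) : ℂ), memℓp_infty ⟨_, by
    rintro _ ⟨n, rfl⟩
    simpa using abs_commutatorKernel_add_le hr n v⟩⟩

end JapaneseBracket

/-- On `ℓ²(ℤ^d)`, with `H₀` the discrete Laplacian and `H` multiplication
by `⟨n⟩`, for every `r > 0` the operator `H^r [H₀, H] H^{-r}`, which acts as
`u(n) ↦ Σ_{|ε|=1} ⟨n⟩^r (⟨n+ε⟩ − ⟨n⟩) ⟨n+ε⟩^{-r} u(n+ε)`, is a bounded operator on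
`ℓ²(ℤ^d)`; equivalently `[H₀,H]` is bounded on the weighted space `𝓗^{2r}`. -/
theorem discrete_commutator_weighted_bounded (d : ℕ) (r : ℝ) (hr : 0 < r) :
    ∃ (T : lp (fun _ : (Fin d → ℤ) => ℂ) 2 →L[ℂ] lp (fun _ : (Fin d → ℤ) => ℂ) 2) (C : ℝ),
      ‖T‖ ≤ C ∧
      ∀ (u : lp (fun _ : (Fin d → ℤ) => ℂ) 2) (n : Fin d → ℤ),
        (T u : ∀ _ : (Fin d → ℤ), ℂ) n =
          ∑ i : Fin d,
            (((jbr n ^ r * (jbr (n + Pi.single i 1) - jbr n)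
                  * (jbr (n + Pi.single i 1) ^ r)⁻¹ : ℝ) : ℂ)
                * (u : ∀ _ : (Fin d → ℤ), ℂ) (n + Pi.single i 1)
              + ((jbr n ^ r * (jbr (n - Pi.single i 1) - jbr n)
                  * (jbr (n - Pi.single i 1) ^ r)⁻¹ : ℝ) : ℂ)
                * (u : ∀ _ : (Fin d → ℤ), ℂ) (n - Pi.single i 1)) := by
  let hop (v : Fin d → ℤ) : ℓ²(Fin d → ℤ, ℂ) →L[ℂ] ℓ²(Fin d → ℤ, ℂ) :=
    lp.weightedShift ENNReal.ofNat_ne_top (shiftedCommutatorKernel hr.le v) (Equiv.addRight v)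
  refine ⟨∑ i, (hop (Pi.single i 1) + hop (-Pi.single i 1)), _, le_rfl, fun u n => ?_⟩
  simp only [sum_apply, lp.coeFn_sum, Finset.sum_apply, add_apply, lp.coeFn_add, Pi.add_apply,
    hop, lp.weightedShift_apply, Equiv.coe_addRight, sub_eq_add_neg]
  rfl
end

section
/- Let A ≥ 2π²/3. Then for every ℓ ≥ 0 and every k ≥ 1, (1+ℓ)² Σ_{n₁+⋯+n_k = ℓ, n_i ≥ 0} ∏_{i=1}^k (1+n_i)^{-2} ≤ A^{k−1}. -/
open Finset Real

/-- Decomposition of a sum over `antidiagonalTuple (k+1) ℓ`. -/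
lemma sum_antidiagonalTuple_succ {M : Type*} [AddCommMonoid M] (k ℓ : ℕ)
    (f : (Fin (k + 1) → ℕ) → M) :
    ∑ n ∈ Finset.Nat.antidiagonalTuple (k + 1) ℓ, f n
      = ∑ p ∈ Finset.HasAntidiagonal.antidiagonal ℓ,
          ∑ m ∈ Finset.Nat.antidiagonalTuple k p.2, f (Fin.cons p.1 m) := by
  rw [← Finset.sum_sigma (Finset.HasAntidiagonal.antidiagonal ℓ)
      (fun p => Finset.Nat.antidiagonalTuple k p.2)
      (fun x => f (Fin.cons x.1.1 x.2))]
  refine Finset.sum_nbij'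
    (i := fun n => (⟨(n 0, ∑ i, n (Fin.succ i)), Fin.tail n⟩ :
      (_ : ℕ × ℕ) × (Fin k → ℕ)))
    (j := fun x => Fin.cons x.1.1 x.2) ?_ ?_ ?_ ?_ ?_
  · intro n hn
    rw [Finset.Nat.mem_antidiagonalTuple] at hn
    simp only [Finset.mem_sigma, Finset.HasAntidiagonal.mem_antidiagonal,
      Finset.Nat.mem_antidiagonalTuple]
    constructor
    · rw [← hn, Fin.sum_univ_succ]
    · rfl
  · rintro ⟨⟨a, b⟩, m⟩ hx
    simp only [Finset.mem_sigma, Finset.HasAntidiagonal.mem_antidiagonal,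
      Finset.Nat.mem_antidiagonalTuple] at hx ⊢
    rw [Fin.sum_cons, hx.2, hx.1]
  · intro n _
    exact Fin.cons_self_tail n
  · rintro ⟨⟨a, b⟩, m⟩ hx
    simp only [Finset.mem_sigma, Finset.HasAntidiagonal.mem_antidiagonal,
      Finset.Nat.mem_antidiagonalTuple] at hx
    simp only [Fin.cons_zero, Fin.cons_succ, Fin.tail_cons]
    obtain ⟨h1, h2⟩ := hx
    subst h2
    rfl
  · intro n _
    rw [Fin.cons_self_tail]

/-- Partial sums of the Basel series. -/
lemma basel_partial (N : ℕ) :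
    ∑ a ∈ Finset.range N, (((1 + (a : ℝ)) ^ 2)⁻¹) ≤ Real.pi ^ 2 / 6 := by
  have h := hasSum_zeta_two
  have key : ∑ a ∈ Finset.range N, (((1 + (a : ℝ)) ^ 2)⁻¹)
      = ∑ m ∈ (Finset.range N).image (fun a : ℕ => a + 1), (1 : ℝ) / (m : ℝ) ^ 2 := by
    rw [Finset.sum_image (fun a _ b _ h => by omega)]
    apply Finset.sum_congr rfl
    intro a _
    push_cast
    rw [one_div, add_comm (a : ℝ) 1]

  rw [key]
  exact sum_le_hasSum _ (fun i _ => by positivity) h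

/-- The key two-variable estimate. -/
lemma key_sum (ℓ : ℕ) :
    ∑ p ∈ Finset.HasAntidiagonal.antidiagonal ℓ,
        (1 + (ℓ : ℝ)) ^ 2 * (((1 + (p.1 : ℝ)) ^ 2)⁻¹ * ((1 + (p.2 : ℝ)) ^ 2)⁻¹)
      ≤ 2 * Real.pi ^ 2 / 3 := by
  have h1 : ∀ p ∈ Finset.HasAntidiagonal.antidiagonal ℓ,
      (1 + (ℓ : ℝ)) ^ 2 * (((1 + (p.1 : ℝ)) ^ 2)⁻¹ * ((1 + (p.2 : ℝ)) ^ 2)⁻¹)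
        ≤ 2 * (((1 + (p.1 : ℝ)) ^ 2)⁻¹ + ((1 + (p.2 : ℝ)) ^ 2)⁻¹) := by
    rintro ⟨a, b⟩ hp
    rw [Finset.HasAntidiagonal.mem_antidiagonal] at hp
    simp only at *
    set x : ℝ := 1 + (a : ℝ) with hx
    set y : ℝ := 1 + (b : ℝ) with hy
    have hx0 : (0:ℝ) < x := by positivity
    have hy0 : (0:ℝ) < y := by positivity
    have hℓ : (1 + (ℓ : ℝ)) ≤ x + y := by
      rw [hx, hy, ← hp]; push_cast; linarith
    have hℓ0 : (0:ℝ) ≤ 1 + (ℓ : ℝ) := by positivity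
    have h2 : (1 + (ℓ : ℝ)) ^ 2 ≤ (x + y) ^ 2 := by nlinarith
    have h3 : (x + y) ^ 2 ≤ 2 * (x ^ 2 + y ^ 2) := by nlinarith [sq_nonneg (x - y)]
    calc (1 + (ℓ : ℝ)) ^ 2 * ((x ^ 2)⁻¹ * (y ^ 2)⁻¹)
        ≤ 2 * (x ^ 2 + y ^ 2) * ((x ^ 2)⁻¹ * (y ^ 2)⁻¹) := by
          apply mul_le_mul_of_nonneg_right (le_trans h2 h3); positivity
      _ = 2 * ((x ^ 2)⁻¹ + (y ^ 2)⁻¹) := by field_simp; ring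
  calc ∑ p ∈ Finset.HasAntidiagonal.antidiagonal ℓ,
        (1 + (ℓ : ℝ)) ^ 2 * (((1 + (p.1 : ℝ)) ^ 2)⁻¹ * ((1 + (p.2 : ℝ)) ^ 2)⁻¹)
      ≤ ∑ p ∈ Finset.HasAntidiagonal.antidiagonal ℓ,
          2 * (((1 + (p.1 : ℝ)) ^ 2)⁻¹ + ((1 + (p.2 : ℝ)) ^ 2)⁻¹) :=
        Finset.sum_le_sum h1
    _ = 2 * (∑ p ∈ Finset.HasAntidiagonal.antidiagonal ℓ, ((1 + (p.1 : ℝ)) ^ 2)⁻¹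
          + ∑ p ∈ Finset.HasAntidiagonal.antidiagonal ℓ, ((1 + (p.2 : ℝ)) ^ 2)⁻¹) := by
        rw [← Finset.sum_add_distrib, Finset.mul_sum]
    _ ≤ 2 * (Real.pi ^ 2 / 6 + Real.pi ^ 2 / 6) := by
        gcongr
        · rw [Finset.Nat.sum_antidiagonal_eq_sum_range_succ_mk]
          exact basel_partial (ℓ + 1)
        · rw [← Finset.Nat.sum_antidiagonal_swap,
            Finset.Nat.sum_antidiagonal_eq_sum_range_succ_mk]
          exact basel_partial (ℓ + 1)
    _ = 2 * Real.pi ^ 2 / 3 := by ring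

/-- For every `A ≥ 2π²/3`, every `ℓ ≥ 0` and every `k ≥ 1`,
`(1+ℓ)² Σ_{n₁+⋯+n_k = ℓ} ∏_{i=1}^k (1+n_i)^{-2} ≤ A^{k−1}`. -/
theorem combinatorial_factorial_inequality
    (A : ℝ) (hA : 2 * Real.pi ^ 2 / 3 ≤ A) (ℓ k : ℕ) (hk : 1 ≤ k) :
    ((1 + ℓ : ℝ)) ^ 2 *
        ∑ n ∈ Finset.Nat.antidiagonalTuple k ℓ, ∏ i, (((1 + (n i : ℝ)) ^ 2)⁻¹)
      ≤ A ^ (k - 1) := by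
  have hpi : (0:ℝ) < 2 * Real.pi ^ 2 / 3 := by positivity
  have hA0 : (0:ℝ) ≤ A := le_trans hpi.le hA
  obtain ⟨j, rfl⟩ : ∃ j, k = j + 1 := ⟨k - 1, by omega⟩
  clear hk
  simp only [Nat.add_sub_cancel]
  induction j generalizing ℓ with
  | zero =>
    rw [Finset.Nat.antidiagonalTuple_one, Finset.sum_singleton]
    have : ∏ i : Fin 1, (((1 + ((![ℓ] : Fin 1 → ℕ) i : ℝ)) ^ 2)⁻¹)
        = ((1 + (ℓ : ℝ)) ^ 2)⁻¹ := by
      rw [Fin.prod_univ_one]; rfl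
    rw [this, pow_zero, mul_inv_cancel₀ (by positivity)]
  | succ j ih =>
    rw [sum_antidiagonalTuple_succ]
    have hterm : ∀ p ∈ Finset.HasAntidiagonal.antidiagonal ℓ,
        ∑ m ∈ Finset.Nat.antidiagonalTuple (j + 1) p.2,
            ∏ i, (((1 + ((Fin.cons p.1 m : Fin (j + 2) → ℕ) i : ℝ)) ^ 2)⁻¹)
          ≤ ((1 + (p.1 : ℝ)) ^ 2)⁻¹ * (((1 + (p.2 : ℝ)) ^ 2)⁻¹ * A ^ j) := by
      rintro ⟨a, b⟩ hp
      simp only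
      have hprod : ∀ m : Fin (j + 1) → ℕ,
          ∏ i, (((1 + ((Fin.cons a m : Fin (j + 2) → ℕ) i : ℝ)) ^ 2)⁻¹)
            = ((1 + (a : ℝ)) ^ 2)⁻¹ * ∏ i, (((1 + (m i : ℝ)) ^ 2)⁻¹) := by
        intro m
        rw [Fin.prod_univ_succ]
        simp [Fin.cons_zero, Fin.cons_succ]
      calc ∑ m ∈ Finset.Nat.antidiagonalTuple (j + 1) b,
            ∏ i, (((1 + ((Fin.cons a m : Fin (j + 2) → ℕ) i : ℝ)) ^ 2)⁻¹)
          = ((1 + (a : ℝ)) ^ 2)⁻¹ *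
              ∑ m ∈ Finset.Nat.antidiagonalTuple (j + 1) b,
                ∏ i, (((1 + (m i : ℝ)) ^ 2)⁻¹) := by
            rw [Finset.mul_sum]
            exact Finset.sum_congr rfl fun m _ => hprod m
        _ ≤ ((1 + (a : ℝ)) ^ 2)⁻¹ * (((1 + (b : ℝ)) ^ 2)⁻¹ * A ^ j) := by
            have hb := ih b
            rw [← le_div_iff₀' (by positivity : (0:ℝ) < (1 + (b:ℝ)) ^ 2),
              div_eq_inv_mul] at hb
            exact mul_le_mul_of_nonneg_left hb (by positivity)
    have hs : ∑ p ∈ Finset.HasAntidiagonal.antidiagonal ℓ,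
        ∑ m ∈ Finset.Nat.antidiagonalTuple (j + 1) p.2,
            ∏ i, (((1 + ((Fin.cons p.1 m : Fin (j + 2) → ℕ) i : ℝ)) ^ 2)⁻¹)
          ≤ ∑ p ∈ Finset.HasAntidiagonal.antidiagonal ℓ,
              ((1 + (p.1 : ℝ)) ^ 2)⁻¹ * (((1 + (p.2 : ℝ)) ^ 2)⁻¹ * A ^ j) :=
      Finset.sum_le_sum hterm
    calc ((1 + ℓ : ℝ)) ^ 2 * ∑ p ∈ Finset.HasAntidiagonal.antidiagonal ℓ,
          ∑ m ∈ Finset.Nat.antidiagonalTuple (j + 1) p.2,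
            ∏ i, (((1 + ((Fin.cons p.1 m : Fin (j + 2) → ℕ) i : ℝ)) ^ 2)⁻¹)
        ≤ ((1 + ℓ : ℝ)) ^ 2 * ∑ p ∈ Finset.HasAntidiagonal.antidiagonal ℓ,
            ((1 + (p.1 : ℝ)) ^ 2)⁻¹ * (((1 + (p.2 : ℝ)) ^ 2)⁻¹ * A ^ j) := by
          apply mul_le_mul_of_nonneg_left hs (by positivity)
      _ = (∑ p ∈ Finset.HasAntidiagonal.antidiagonal ℓ,
            (1 + (ℓ : ℝ)) ^ 2 * (((1 + (p.1 : ℝ)) ^ 2)⁻¹ * ((1 + (p.2 : ℝ)) ^ 2)⁻¹))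
            * A ^ j := by
          rw [Finset.sum_mul, Finset.mul_sum]
          exact Finset.sum_congr rfl fun p _ => by ring
      _ ≤ (2 * Real.pi ^ 2 / 3) * A ^ j := by
          apply mul_le_mul_of_nonneg_right (key_sum ℓ) (by positivity)
      _ ≤ A * A ^ j := by
          apply mul_le_mul_of_nonneg_right hA (by positivity)
      _ = A ^ (j + 1) := (pow_succ' A j).symm
end

section
/- Let P(t), Q(t) be operator families such that for all 0 ≤ ℓ ≤ L and 0 ≤ p ≤ n, ‖H^p ∂_t^ℓ P(t) H^{-p}‖ ≤ a b^{min(ℓ,1)} c^{k+ℓ}(k+ℓ)!/(A(1+ℓ)²) and ‖H^p ∂_t^ℓ Q(t) H^{-p}‖ ≤ d f^{min(ℓ,1)} c^{i+ℓ}(i+ℓ)!/(A(1+ℓ)²), where A satisfies the combinatorial inequality (1+ℓ)²Σ_{n₁+⋯+n_k=ℓ}∏(1+n_i)^{-2} ≤ A^{k-1}. Then ‖H^p ∂_t^ℓ (P(t)Q(t)) H^{-p}‖ ≤ a d (b+f+bf)^{min(ℓ,1)} c^{k+i+ℓ}(k+i+ℓ)!/(A(1+ℓ)²) for all 0 ≤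 ℓ ≤ L and 0 ≤ p ≤ n. -/
open Finset

private lemma leibniz_iteratedDeriv' {A : Type*} [NormedRing A] [NormedAlgebra ℝ A]
    (f g : ℝ → A) (hf : ContDiff ℝ (⊤ : ℕ∞) f) (hg : ContDiff ℝ (⊤ : ℕ∞) g) :
    ∀ (ℓ : ℕ) (t : ℝ), iteratedDeriv ℓ (fun s => f s * g s) t
      = ∑ ij ∈ Finset.HasAntidiagonal.antidiagonal ℓ,
          (ℓ.choose ij.1) • (iteratedDeriv ij.1 f t * iteratedDeriv ij.2 g t) := by
  intro ℓ
  induction ℓ with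
  | zero => intro t; simp
  | succ ℓ ih =>
    intro t
    have hdF : ∀ j, Differentiable ℝ (iteratedDeriv j f) := fun j =>
      hf.differentiable_iteratedDeriv j (by exact_mod_cast lt_top_iff_ne_top.2 (by simp))
    have hdG : ∀ j, Differentiable ℝ (iteratedDeriv j g) := fun j =>
      hg.differentiable_iteratedDeriv j (by exact_mod_cast lt_top_iff_ne_top.2 (by simp))
    have hfun : iteratedDeriv ℓ (fun s => f s * g s)
        = fun s => ∑ ij ∈ Finset.HasAntidiagonal.antidiagonal ℓ,
            (ℓ.choose ij.1) • (iteratedDeriv ij.1 f s * iteratedDeriv ij.2 g s) :=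
      funext fun s => ih s
    rw [iteratedDeriv_succ, hfun]
    have hterm : ∀ ij : ℕ × ℕ, DifferentiableAt ℝ
        (fun s => (ℓ.choose ij.1) • (iteratedDeriv ij.1 f s * iteratedDeriv ij.2 g s)) t :=
      fun ij => (((hdF ij.1 t).fun_mul (hdG ij.2 t)).fun_const_smul _)
    rw [deriv_fun_sum (fun ij _ => hterm ij)]
    have hstep : ∀ ij : ℕ × ℕ,
        deriv (fun s => (ℓ.choose ij.1) • (iteratedDeriv ij.1 f s * iteratedDeriv ij.2 g s)) t
        = (ℓ.choose ij.1) • (iteratedDeriv (ij.1+1) f t * iteratedDeriv ij.2 g t)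
          + (ℓ.choose ij.1) • (iteratedDeriv ij.1 f t * iteratedDeriv (ij.2+1) g t) := by
      intro ij
      rw [deriv_fun_const_smul _ ((hdF ij.1 t).fun_mul (hdG ij.2 t)),
        deriv_fun_mul (hdF ij.1 t) (hdG ij.2 t), iteratedDeriv_succ, iteratedDeriv_succ, smul_add]
    simp only [hstep, Finset.sum_add_distrib]
    rw [Finset.sum_antidiagonal_choose_succ_nsmul
      (fun p q => iteratedDeriv p f t * iteratedDeriv q g t) ℓ]
    rw [add_comm]
    congr 1
    exact Finset.sum_congr rfl fun ij hij => by
      rw [Nat.choose_symm_of_eq_add (Finset.HasAntidiagonal.mem_antidiagonal.1 hij).symm]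

private lemma choose_shift (n r s : ℕ) : n.choose r ≤ (n + s).choose (r + s) := by
  induction s with
  | zero => simp
  | succ s ih =>
    calc n.choose r ≤ (n + s).choose (r + s) := ih
      _ ≤ (n + s + 1).choose (r + s + 1) := by
          rw [Nat.choose_succ_succ]; exact Nat.le_add_right _ _

private lemma nat_comb (k i j m : ℕ) :
    (j + m).choose j * Nat.factorial (k + j) * Nat.factorial (i + m)
      ≤ Nat.factorial (k + i + (j + m)) := by
  have h1 : (j + m).choose j ≤ (k + i + (j + m)).choose (k + j) := by
    calc (j + m).choose j ≤ (j + m + k).choose (j + k) := choose_shift _ _ _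
      _ ≤ (k + i + (j + m)).choose (j + k) := Nat.choose_le_choose _ (by omega)
      _ = (k + i + (j + m)).choose (k + j) := by rw [Nat.add_comm j k]
  calc (j + m).choose j * Nat.factorial (k + j) * Nat.factorial (i + m)
      ≤ (k + i + (j + m)).choose (k + j) * Nat.factorial (k + j) * Nat.factorial (i + m) := by
        exact Nat.mul_le_mul_right _ (Nat.mul_le_mul_right _ h1)
    _ = Nat.factorial (k + i + (j + m)) := by
        have : k + i + (j + m) = (k + j) + (i + m) := by omega
        rw [this]
        have h2 : k + j ≤ k + j + (i + m) := Nat.le_add_right _ _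
        have h3 := Nat.choose_mul_factorial_mul_factorial h2
        simpa [Nat.add_sub_cancel_left] using h3

private lemma pow_min_le_pow_min {b f : ℝ} (hb : 0 < b) (hf : 0 < f) (j m : ℕ) :
    b ^ (min j 1) * f ^ (min m 1) ≤ (b + f + b * f) ^ (min (j + m) 1) := by
  rcases Nat.eq_zero_or_pos j with hj | hj <;> rcases Nat.eq_zero_or_pos m with hm | hm
  · subst hj; subst hm; simp
  · have e1 : min j 1 = 0 := by omega
    have e2 : min m 1 = 1 := by omega
    have e3 : min (j + m) 1 = 1 := by omega
    rw [e1, e2, e3, pow_zero, one_mul, pow_one, pow_one]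
    nlinarith
  · have e1 : min j 1 = 1 := by omega
    have e2 : min m 1 = 0 := by omega
    have e3 : min (j + m) 1 = 1 := by omega
    rw [e1, e2, e3, pow_zero, mul_one, pow_one, pow_one]
    nlinarith
  · have e1 : min j 1 = 1 := by omega
    have e2 : min m 1 = 1 := by omega
    have e3 : min (j + m) 1 = 1 := by omega
    rw [e1, e2, e3, pow_one, pow_one, pow_one]
    nlinarith

/-- Product rule for analytic-in-time estimates: if
`‖H^p ∂_t^ℓ P(t) H^{-p}‖ ≤ a b^{min(ℓ,1)} c^{k+ℓ}(k+ℓ)!/(A(1+ℓ)²)` and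
`‖H^p ∂_t^ℓ Q(t) H^{-p}‖ ≤ d f^{min(ℓ,1)} c^{i+ℓ}(i+ℓ)!/(A(1+ℓ)²)` for `0 ≤ ℓ ≤ L`,
`0 ≤ p ≤ n`, where `A` satisfies the combinatorial inequality, then
`‖H^p ∂_t^ℓ (PQ)(t) H^{-p}‖ ≤ a d (b+f+bf)^{min(ℓ,1)} c^{k+i+ℓ}(k+i+ℓ)!/(A(1+ℓ)²)`. -/
theorem analytic_product_estimate
    {E : Type*} [NormedAddCommGroup E] [InnerProductSpace ℂ E] [CompleteSpace E]
    (H : E →L[ℂ] E) (hsa : IsSelfAdjoint H)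
    (hpos : ∀ x ∈ spectrum ℝ H, (0:ℝ) < x)
    (P Q : ℝ → E →L[ℂ] E) (hP : ContDiff ℝ (⊤ : ℕ∞) P) (hQ : ContDiff ℝ (⊤ : ℕ∞) Q)
    (a b c d f A : ℝ) (ha : 0 < a) (hb : 0 < b) (hc : 0 < c) (hd : 0 < d) (hf : 0 < f)
    (hA1 : 1 ≤ A)
    (hAcomb : ∀ (ℓ m : ℕ), 1 ≤ m →
      ((1 + ℓ : ℝ)) ^ 2 *
          ∑ q ∈ Finset.Nat.antidiagonalTuple m ℓ, ∏ j, (((1 + (q j : ℝ)) ^ 2)⁻¹)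
        ≤ A ^ (m - 1))
    (k i n L : ℕ)
    (hPb : ∀ (t : ℝ), ∀ ℓ ≤ L, ∀ p ≤ n,
      ‖cfc (fun x : ℝ => x ^ (p:ℝ)) H * iteratedDeriv ℓ P t
          * cfc (fun x : ℝ => x ^ (-(p:ℝ))) H‖
        ≤ a * b ^ (min ℓ 1) * c ^ (k + ℓ) * (Nat.factorial (k + ℓ))
            / (A * (1 + ℓ : ℝ) ^ 2))
    (hQb : ∀ (t : ℝ), ∀ ℓ ≤ L, ∀ p ≤ n,
      ‖cfc (fun x : ℝ => x ^ (p:ℝ)) H * iteratedDeriv ℓ Q t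
          * cfc (fun x : ℝ => x ^ (-(p:ℝ))) H‖
        ≤ d * f ^ (min ℓ 1) * c ^ (i + ℓ) * (Nat.factorial (i + ℓ))
            / (A * (1 + ℓ : ℝ) ^ 2)) :
    ∀ (t : ℝ), ∀ ℓ ≤ L, ∀ p ≤ n,
      ‖cfc (fun x : ℝ => x ^ (p:ℝ)) H * iteratedDeriv ℓ (fun s => P s * Q s) t
          * cfc (fun x : ℝ => x ^ (-(p:ℝ))) H‖
        ≤ a * d * (b + f + b * f) ^ (min ℓ 1) * c ^ (k + i + ℓ)
            * (Nat.factorial (k + i + ℓ)) / (A * (1 + ℓ : ℝ) ^ 2) := by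
  intro t ℓ hℓ p hp
  have hA0 : (0:ℝ) < A := lt_of_lt_of_le one_pos hA1
  set Hp := cfc (fun x : ℝ => x ^ (p:ℝ)) H with hHp
  set Hm := cfc (fun x : ℝ => x ^ (-(p:ℝ))) H with hHm
  have hcont1 : ContinuousOn (fun x : ℝ => x ^ (p:ℝ)) (spectrum ℝ H) := fun x hx =>
    (Real.continuousAt_rpow_const x _ (Or.inl (hpos x hx).ne')).continuousWithinAt
  have hcont2 : ContinuousOn (fun x : ℝ => x ^ (-(p:ℝ))) (spectrum ℝ H) := fun x hx =>
    (Real.continuousAt_rpow_const x _ (Or.inl (hpos x hx).ne')).continuousWithinAt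
  have hinv : Hm * Hp = 1 := by
    rw [hHm, hHp, ← cfc_mul _ _ H hcont2 hcont1]
    calc cfc (fun x : ℝ => x ^ (-(p:ℝ)) * x ^ (p:ℝ)) H
        = cfc (fun _ : ℝ => (1:ℝ)) H := cfc_congr fun x hx => by
          rw [← Real.rpow_add (hpos x hx), neg_add_cancel, Real.rpow_zero]
      _ = 1 := cfc_const_one ℝ H hsa
  rw [leibniz_iteratedDeriv' P Q hP hQ ℓ t]
  have hsplit : Hp * (∑ ij ∈ Finset.HasAntidiagonal.antidiagonal ℓ,
        (ℓ.choose ij.1) • (iteratedDeriv ij.1 P t * iteratedDeriv ij.2 Q t)) * Hm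
      = ∑ ij ∈ Finset.HasAntidiagonal.antidiagonal ℓ, (ℓ.choose ij.1) •
          ((Hp * iteratedDeriv ij.1 P t * Hm) * (Hp * iteratedDeriv ij.2 Q t * Hm)) := by
    rw [Finset.mul_sum, Finset.sum_mul]
    refine Finset.sum_congr rfl fun ij _ => ?_
    rw [mul_smul_comm, smul_mul_assoc]
    congr 1
    simp only [mul_assoc]
    rw [show Hm * (Hp * (iteratedDeriv ij.2 Q t * Hm)) = iteratedDeriv ij.2 Q t * Hm by
      rw [← mul_assoc, hinv, one_mul]]
  rw [hsplit]
  set N : ℝ := a * d * (b + f + b * f) ^ (min ℓ 1) * c ^ (k + i + ℓ)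
      * (Nat.factorial (k + i + ℓ)) with hN
  have hN0 : 0 < N := by
    have := Nat.factorial_pos (k + i + ℓ)
    positivity
  -- bound each term
  have key : ∀ ij ∈ Finset.HasAntidiagonal.antidiagonal ℓ,
      ‖(ℓ.choose ij.1) • ((Hp * iteratedDeriv ij.1 P t * Hm)
          * (Hp * iteratedDeriv ij.2 Q t * Hm))‖
        ≤ (N / A ^ 2) * (((1 + (ij.1:ℝ)) ^ 2)⁻¹ * ((1 + (ij.2:ℝ)) ^ 2)⁻¹) := by
    rintro ⟨j, m⟩ hij
    rw [Finset.HasAntidiagonal.mem_antidiagonal] at hij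
    simp only
    have hj1 : (0:ℝ) < (1 + (j:ℝ)) ^ 2 := by positivity
    have hm1 : (0:ℝ) < (1 + (m:ℝ)) ^ 2 := by positivity
    have hPj := hPb t j (le_trans (by omega) hℓ) p hp
    have hQm := hQb t m (le_trans (by omega) hℓ) p hp
    have hPn : (0:ℝ) ≤ ‖Hp * iteratedDeriv j P t * Hm‖ := norm_nonneg _
    have hQn : (0:ℝ) ≤ ‖Hp * iteratedDeriv m Q t * Hm‖ := norm_nonneg _
    calc ‖(ℓ.choose j) • ((Hp * iteratedDeriv j P t * Hm) * (Hp * iteratedDeriv m Q t * Hm))‖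
        = (ℓ.choose j : ℝ) * ‖(Hp * iteratedDeriv j P t * Hm)
            * (Hp * iteratedDeriv m Q t * Hm)‖ := by
          rw [← Nat.cast_smul_eq_nsmul ℝ, norm_smul, Real.norm_natCast]
      _ ≤ (ℓ.choose j : ℝ) * (‖Hp * iteratedDeriv j P t * Hm‖
            * ‖Hp * iteratedDeriv m Q t * Hm‖) := by
          exact mul_le_mul_of_nonneg_left (norm_mul_le _ _) (by positivity)
      _ ≤ (ℓ.choose j : ℝ) * ((a * b ^ (min j 1) * c ^ (k + j) * (Nat.factorial (k + j))
              / (A * (1 + j : ℝ) ^ 2))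
            * (d * f ^ (min m 1) * c ^ (i + m) * (Nat.factorial (i + m))
              / (A * (1 + m : ℝ) ^ 2))) := by
          refine mul_le_mul_of_nonneg_left ?_ (by positivity)
          exact mul_le_mul hPj hQm hQn (le_trans hPn hPj)
      _ = ((ℓ.choose j : ℝ) * (Nat.factorial (k + j)) * (Nat.factorial (i + m)))
            * (b ^ (min j 1) * f ^ (min m 1)) * (c ^ (k + j) * c ^ (i + m)) * (a * d)
            / (A ^ 2 * ((1 + (j:ℝ)) ^ 2 * (1 + (m:ℝ)) ^ 2)) := by
          field_simp
      _ ≤ ((Nat.factorial (k + i + ℓ) : ℝ))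
            * ((b + f + b * f) ^ (min ℓ 1)) * (c ^ (k + i + ℓ)) * (a * d)
            / (A ^ 2 * ((1 + (j:ℝ)) ^ 2 * (1 + (m:ℝ)) ^ 2)) := by
          have e1 : (ℓ.choose j : ℝ) * (Nat.factorial (k + j)) * (Nat.factorial (i + m))
              ≤ ((Nat.factorial (k + i + ℓ) : ℝ)) := by
            rw [← hij]
            exact_mod_cast nat_comb k i j m
          have e2 : b ^ (min j 1) * f ^ (min m 1) ≤ (b + f + b * f) ^ (min ℓ 1) := by
            rw [← hij]; exact pow_min_le_pow_min hb hf j m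
          have e3 : c ^ (k + j) * c ^ (i + m) ≤ c ^ (k + i + ℓ) := le_of_eq (by
            rw [← pow_add]; congr 1; omega)
          gcongr
      _ = (N / A ^ 2) * (((1 + (j:ℝ)) ^ 2)⁻¹ * ((1 + (m:ℝ)) ^ 2)⁻¹) := by
          rw [hN]; field_simp
  refine le_trans (norm_sum_le _ _) (le_trans (Finset.sum_le_sum key) ?_)
  rw [← Finset.mul_sum]
  -- combinatorial sum bound
  have hcomb := hAcomb ℓ 2 one_le_two
  have hSsum : ∑ q ∈ Finset.Nat.antidiagonalTuple 2 ℓ, ∏ j, (((1 + (q j : ℝ)) ^ 2)⁻¹)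
      = ∑ ij ∈ Finset.HasAntidiagonal.antidiagonal ℓ, (((1 + (ij.1:ℝ)) ^ 2)⁻¹ * ((1 + (ij.2:ℝ)) ^ 2)⁻¹) := by
    rw [Finset.Nat.antidiagonalTuple_two, Finset.sum_map]
    refine Finset.sum_congr rfl fun ij _ => ?_
    simp [Fin.prod_univ_two, piFinTwoEquiv, mul_comm]
  rw [hSsum] at hcomb
  norm_num at hcomb
  have hℓ2 : (0:ℝ) < (1 + (ℓ:ℝ)) ^ 2 := by positivity
  have hS : ∑ ij ∈ Finset.HasAntidiagonal.antidiagonal ℓ, (((1 + (ij.1:ℝ)) ^ 2)⁻¹ * ((1 + (ij.2:ℝ)) ^ 2)⁻¹)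
      ≤ A / (1 + (ℓ:ℝ)) ^ 2 := by
    rw [le_div_iff₀ hℓ2]
    nlinarith [hcomb]
  calc N / A ^ 2 * ∑ ij ∈ Finset.HasAntidiagonal.antidiagonal ℓ,
        (((1 + (ij.1:ℝ)) ^ 2)⁻¹ * ((1 + (ij.2:ℝ)) ^ 2)⁻¹)
      ≤ N / A ^ 2 * (A / (1 + (ℓ:ℝ)) ^ 2) := by
        exact mul_le_mul_of_nonneg_left hS (by positivity)
    _ = N / (A * (1 + (ℓ:ℝ)) ^ 2) := by field_simp
end

section
/- (Iteration of a smoothing commutator estimate implies polynomial growth) Let U(t,s) be a propagator unitary on 𝓗⁰ such that for some θ ∈ (0,1] and constants C_k, ‖U(t,s)ψ‖_{2k} ≤ ‖ψ‖_{2k} + C_k ∫_s^t ‖U(r,s)ψ‖_{2(k−θ)} dr for all k in an admissible range (with ‖·‖_{2j} interpreted as ‖·‖₀ when j ≤ 0). Then choosing m with mθ ≥ k, there exists C_{k,m} such that ‖U(t,s)ψ‖_{2k} ≤ C_{k,m}⟨t−s⟩^m (‖ψ‖_{2k} + ‖ψ‖₀) for all t ≥ s. -/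
/-!
Write `⟨x⟩ = √(1 + x²)`. By induction on `n`, every level `j ≤ nθ` (and `j ≤ k`) of the norm
scale grows at most like `⟨t - s⟩ⁿ`. Levels `j ≤ 0` are the `𝓗⁰` norm, preserved by unitarity.
For a level `0 < j ≤ (n + 1)θ`, the recursive inequality bounds it by its initial value plus `C`
times the integral over `[s, t]` of level `j - θ ≤ nθ`, which grows like `⟨r - s⟩ⁿ ≤ ⟨t - s⟩ⁿ`;
the integral contributes one more factor `t - s ≤ ⟨t - s⟩`. Taking `n = m` and `j = k` concludes.
-/

section PolynomialGrowth

variable {E : Type*} [SeminormedAddGroup E]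

theorem norm_le_of_nrm_eq_norm_of_nonpos {nrm : ℝ → E → ℝ}
    (hzero : ∀ j : ℝ, j ≤ 0 → ∀ ψ : E, nrm j ψ = ‖ψ‖)
    (hmono : ∀ i j : ℝ, i ≤ j → ∀ ψ : E, nrm i ψ ≤ nrm j ψ) (j : ℝ) (ψ : E) :
    ‖ψ‖ ≤ nrm j ψ :=
  hzero (min j 0) (min_le_right j 0) ψ ▸ hmono _ _ (min_le_left j 0) ψ

theorem intervalIntegral_le_mul_of_nonneg_of_le {f : ℝ → ℝ} {s t B : ℝ} (hst : s ≤ t)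
    (hf : ∀ r, 0 ≤ f r) (hfB : ∀ r ∈ Set.Icc s t, f r ≤ B) :
    ∫ r in s..t, f r ≤ (t - s) * B := by
  have hnorm : ∀ r ∈ Set.uIoc s t, ‖f r‖ ≤ B := fun r hr => by
    rw [Set.uIoc_of_le hst] at hr
    rw [Real.norm_of_nonneg (hf r)]
    exact hfB r (Set.Ioc_subset_Icc_self hr)
  calc ∫ r in s..t, f r ≤ ‖∫ r in s..t, f r‖ := Real.le_norm_self _
    _ ≤ B * |t - s| := intervalIntegral.norm_integral_le_of_norm_le_const hnorm
    _ = (t - s) * B := by rw [abs_of_nonneg (sub_nonneg.2 hst), mul_comm]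

theorem one_le_sqrt_one_add_sq (x : ℝ) : 1 ≤ √(1 + x ^ 2) :=
  Real.one_le_sqrt.2 (le_add_of_nonneg_right (sq_nonneg x))

theorem le_sqrt_one_add_sq (x : ℝ) : x ≤ √(1 + x ^ 2) :=
  (le_abs_self x).trans (Real.abs_le_sqrt (le_add_of_nonneg_left zero_le_one))

def PolynomialGrowthBound (U : ℝ → ℝ → E → E) (nrm : ℝ → E → ℝ) (θ k : ℝ) (n : ℕ) (A : ℝ) :
    Prop :=
  ∀ j : ℝ, j ≤ n * θ → j ≤ k → ∀ s t : ℝ, s ≤ t → ∀ ψ : E,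
    nrm j (U t s ψ) ≤ A * √(1 + (t - s) ^ 2) ^ n * (nrm k ψ + ‖ψ‖)

variable {U : ℝ → ℝ → E → E} {nrm : ℝ → E → ℝ} {θ k C : ℝ}

theorem polynomialGrowthBound_zero (hunit : ∀ (t s : ℝ) (ψ : E), ‖U t s ψ‖ = ‖ψ‖)
    (hzero : ∀ j : ℝ, j ≤ 0 → ∀ ψ : E, nrm j ψ = ‖ψ‖)
    (hmono : ∀ i j : ℝ, i ≤ j → ∀ ψ : E, nrm i ψ ≤ nrm j ψ) :
    PolynomialGrowthBound U nrm θ k 0 1 := by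
  intro j hj _ s t _ ψ
  rw [Nat.cast_zero, zero_mul] at hj
  rw [hzero j hj, hunit, pow_zero, one_mul, one_mul]
  exact le_add_of_nonneg_left ((norm_nonneg ψ).trans
    (norm_le_of_nrm_eq_norm_of_nonpos hzero hmono k ψ))

theorem PolynomialGrowthBound.succ (hunit : ∀ (t s : ℝ) (ψ : E), ‖U t s ψ‖ = ‖ψ‖)
    (hzero : ∀ j : ℝ, j ≤ 0 → ∀ ψ : E, nrm j ψ = ‖ψ‖)
    (hmono : ∀ i j : ℝ, i ≤ j → ∀ ψ : E, nrm i ψ ≤ nrm j ψ) (hθ : 0 < θ) (hC : 0 ≤ C)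
    (hrec : ∀ j : ℝ, 0 < j → j ≤ k → ∀ s t : ℝ, s ≤ t → ∀ ψ : E,
      nrm j (U t s ψ) ≤ nrm j ψ + C * ∫ r in s..t, nrm (j - θ) (U r s ψ))
    {n : ℕ} {A : ℝ} (hA : 0 ≤ A) (h : PolynomialGrowthBound U nrm θ k n A) :
    PolynomialGrowthBound U nrm θ k (n + 1) (1 + C * A) := by
  intro j hj hjk s t hst ψ
  push_cast at hj
  have hnrm := norm_le_of_nrm_eq_norm_of_nonpos hzero hmono
  set w := √(1 + (t - s) ^ 2)
  set M := nrm k ψ + ‖ψ‖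
  have hM : 0 ≤ M := add_nonneg ((norm_nonneg ψ).trans (hnrm k ψ)) (norm_nonneg ψ)
  have hw : 1 ≤ w := one_le_sqrt_one_add_sq _
  have hB : 0 ≤ A * w ^ n * M := by positivity
  have hstep : nrm j (U t s ψ) ≤ M + C * ((t - s) * (A * w ^ n * M)) := by
    rcases le_or_gt j 0 with hj0 | hj0
    · rw [hzero j hj0, hunit]
      have : 0 ≤ C * ((t - s) * (A * w ^ n * M)) :=
        mul_nonneg hC (mul_nonneg (sub_nonneg.2 hst) hB)
      linarith [hnrm k ψ]
    · have hlower : ∀ r ∈ Set.Icc s t, nrm (j - θ) (U r s ψ) ≤ A * w ^ n * M := fun r hr => by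
        refine (h (j - θ) (by linarith) (by linarith) s r hr.1 ψ).trans ?_
        gcongr
        have hrs : 0 ≤ r - s := sub_nonneg.2 hr.1
        exact Real.sqrt_le_sqrt (by gcongr; exact hr.2)
      have hint := intervalIntegral_le_mul_of_nonneg_of_le hst
        (fun r => (norm_nonneg _).trans (hnrm (j - θ) (U r s ψ))) hlower
      linarith [hrec j hj0 hjk s t hst ψ, hmono j k hjk ψ, mul_le_mul_of_nonneg_left hint hC,
        norm_nonneg ψ]
  calc nrm j (U t s ψ) ≤ M + C * ((t - s) * (A * w ^ n * M)) := hstep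
    _ ≤ w ^ (n + 1) * M + C * (w * (A * w ^ n * M)) := by
        gcongr
        · exact le_mul_of_one_le_left hM (one_le_pow₀ hw)
        · exact le_sqrt_one_add_sq _
    _ = (1 + C * A) * w ^ (n + 1) * M := by ring

theorem exists_polynomialGrowthBound (hunit : ∀ (t s : ℝ) (ψ : E), ‖U t s ψ‖ = ‖ψ‖)
    (hzero : ∀ j : ℝ, j ≤ 0 → ∀ ψ : E, nrm j ψ = ‖ψ‖)
    (hmono : ∀ i j : ℝ, i ≤ j → ∀ ψ : E, nrm i ψ ≤ nrm j ψ) (hθ : 0 < θ) (hC : 0 ≤ C)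
    (hrec : ∀ j : ℝ, 0 < j → j ≤ k → ∀ s t : ℝ, s ≤ t → ∀ ψ : E,
      nrm j (U t s ψ) ≤ nrm j ψ + C * ∫ r in s..t, nrm (j - θ) (U r s ψ)) (n : ℕ) :
    ∃ A : ℝ, 0 < A ∧ PolynomialGrowthBound U nrm θ k n A := by
  induction n with
  | zero => exact ⟨1, one_pos, polynomialGrowthBound_zero hunit hzero hmono⟩
  | succ n ih =>
    obtain ⟨A, hA, hbound⟩ := ih
    exact ⟨1 + C * A, by positivity, hbound.succ hunit hzero hmono hθ hC hrec hA.le⟩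

end PolynomialGrowth

theorem iterated_commutator_polynomial_growth_general
    {E : Type*} [NormedAddCommGroup E] [NormedSpace ℂ E]
    (U : ℝ → ℝ → E →L[ℂ] E)
    (hunit : ∀ (t s : ℝ) (ψ : E), ‖U t s ψ‖ = ‖ψ‖)
    (nrm : ℝ → E → ℝ)
    (hzero : ∀ j : ℝ, j ≤ 0 → ∀ ψ : E, nrm j ψ = ‖ψ‖)
    (hmono : ∀ i j : ℝ, i ≤ j → ∀ ψ : E, nrm i ψ ≤ nrm j ψ)
    (θ : ℝ) (hθ0 : 0 < θ)
    (k : ℝ) (C : ℝ) (hC : 0 < C)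
    (hrec : ∀ j : ℝ, 0 < j → j ≤ k → ∀ s t : ℝ, s ≤ t → ∀ ψ : E,
      nrm j (U t s ψ) ≤ nrm j ψ + C * ∫ r in s..t, nrm (j - θ) (U r s ψ))
    (m : ℕ) (hm : k ≤ (m : ℝ) * θ) :
    ∃ C' : ℝ, 0 < C' ∧ ∀ s t : ℝ, s ≤ t → ∀ ψ : E,
      nrm k (U t s ψ) ≤ C' * Real.sqrt (1 + (t - s) ^ 2) ^ m * (nrm k ψ + ‖ψ‖) := by
  obtain ⟨A, hA, hbound⟩ :=
    exists_polynomialGrowthBound (U := fun t s => U t s) hunit hzero hmono hθ0 hC.le hrec m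
  exact ⟨A, hA, hbound k hm le_rfl⟩

/-- (Iteration of a smoothing commutator estimate implies polynomial
growth.) Let `U(t,s)` be a propagator which is unitary on `𝓗⁰` and suppose the scale of
norms `nrm j = ‖·‖_{2j}` (with `nrm j = ‖·‖₀` for `j ≤ 0`, monotone in `j`) satisfies, for
some `θ ∈ (0,1]` and a constant `C`, the recursive integral inequality
`‖U(t,s)ψ‖_{2j} ≤ ‖ψ‖_{2j} + C ∫_s^t ‖U(r,s)ψ‖_{2(j−θ)} dr` for all `0 < j ≤ k`.
Then, choosing `m` with `mθ ≥ k`, there exists `C'` such that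
`‖U(t,s)ψ‖_{2k} ≤ C' ⟨t−s⟩^m (‖ψ‖_{2k} + ‖ψ‖₀)` for all `t ≥ s`. -/
theorem iterated_commutator_polynomial_growth
    {E : Type*} [NormedAddCommGroup E] [NormedSpace ℂ E]
    (U : ℝ → ℝ → E →L[ℂ] E)
    (hunit : ∀ (t s : ℝ) (ψ : E), ‖U t s ψ‖ = ‖ψ‖)
    (nrm : ℝ → E → ℝ)
    (hzero : ∀ j : ℝ, j ≤ 0 → ∀ ψ : E, nrm j ψ = ‖ψ‖)
    (hnonneg : ∀ (j : ℝ) (ψ : E), 0 ≤ nrm j ψ)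
    (hmono : ∀ i j : ℝ, i ≤ j → ∀ ψ : E, nrm i ψ ≤ nrm j ψ)
    (θ : ℝ) (hθ0 : 0 < θ) (hθ1 : θ ≤ 1)
    (k : ℝ) (hk : 0 < k) (C : ℝ) (hC : 0 < C)
    (hrec : ∀ j : ℝ, 0 < j → j ≤ k → ∀ s t : ℝ, s ≤ t → ∀ ψ : E,
      nrm j (U t s ψ) ≤ nrm j ψ + C * ∫ r in s..t, nrm (j - θ) (U r s ψ))
    (m : ℕ) (hm : k ≤ (m : ℝ) * θ) :
    ∃ C' : ℝ, 0 < C' ∧ ∀ s t : ℝ, s ≤ t → ∀ ψ : E,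
      nrm k (U t s ψ) ≤ C' * Real.sqrt (1 + (t - s) ^ 2) ^ m * (nrm k ψ + ‖ψ‖) :=
  iterated_commutator_polynomial_growth_general U hunit nrm hzero hmono θ hθ0 k C hC hrec m hm
end
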